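/- Let n ≥ 3 and define G : ℕ → ℕ by G(x) = mex {G(x-s) : s ∈ {2, 4n, 4n+2}, s ≤ x}. Then for all x ∈ ℕ, G(x) is even if and only if x mod 4 ∈ {0, 1}, and G(x) ≥ 2 if and only if x mod 8n ∈ [4n, 8n-1]. -/
import Mathlib


noncomputable def mex (T : Set ℕ) : ℕ := sInf {k : ℕ | k ∉ T}

def subRec (n : ℕ) (G : ℕ → ℕ) : Prop :=
  ∀ x : ℕ, G x = mex {y : ℕ | ∃ s ∈ ({2, 4*n, 4*n+2} : Set ℕ), s ≤ x ∧ y = G (x - s)}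

def passRec (n : ℕ) (G0 G1 : ℕ → ℕ) : Prop :=
  G1 0 = 0 ∧ G1 1 = 0 ∧
  ∀ x : ℕ, 2 ≤ x →
    G1 x = mex ({y : ℕ | ∃ s ∈ ({2, 4*n, 4*n+2} : Set ℕ), s ≤ x ∧ y = G1 (x - s)} ∪ {G0 x})

/-- The closed form for the Grundy values. -/
def Fc (n x : ℕ) : ℕ := (if 4*n ≤ x % (8*n) then 2 else 0) + x % 4 / 2

lemma mex_eq {T : Set ℕ} {m : ℕ} (h1 : m ∉ T) (h2 : ∀ k < m, k ∈ T) : mex T = m := by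
  have hne : m ∈ {k : ℕ | k ∉ T} := h1
  have hmem : sInf {k : ℕ | k ∉ T} ∈ {k : ℕ | k ∉ T} := Nat.sInf_mem ⟨m, hne⟩
  have hle : sInf {k : ℕ | k ∉ T} ≤ m := Nat.sInf_le hne
  rcases lt_or_eq_of_le hle with h | h
  · exact absurd (h2 _ h) hmem
  · exact h

lemma mod_sub_lo {m s x : ℕ} (hm : 0 < m) (h : s ≤ x % m) : (x - s) % m = x % m - s := by
  have hd := Nat.div_add_mod x m
  have h1 : x - s = m * (x / m) + (x % m - s) := by omega
  rw [h1, Nat.mul_add_mod, Nat.mod_eq_of_lt (by have := Nat.mod_lt x hm; omega)]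

lemma mod_sub_hi {m s x : ℕ} (hm : 0 < m) (hs : s ≤ x) (hsm : s ≤ m) (h : x % m < s) :
    (x - s) % m = x % m + m - s := by
  have hd := Nat.div_add_mod x m
  have h1 : x - s + m = m * (x / m) + (x % m + m - s) := by omega
  have h2 : (x - s) % m = (x - s + m) % m := (Nat.add_mod_right _ m).symm
  rw [h2, h1, Nat.mul_add_mod, Nat.mod_eq_of_lt (by omega)]

lemma Fc_par (n x : ℕ) : Fc n x % 2 = x % 4 / 2 := by
  unfold Fc; split <;> omega

lemma memS {n x : ℕ} (G : ℕ → ℕ) (y : ℕ) :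
    y ∈ {y : ℕ | ∃ s ∈ ({2, 4*n, 4*n+2} : Set ℕ), s ≤ x ∧ y = G (x - s)} ↔
    (2 ≤ x ∧ y = G (x - 2)) ∨ (4*n ≤ x ∧ y = G (x - 4*n)) ∨
      (4*n + 2 ≤ x ∧ y = G (x - (4*n + 2))) := by
  simp only [Set.mem_setOf_eq, Set.mem_insert_iff, Set.mem_singleton_iff]
  constructor
  · rintro ⟨s, (rfl | rfl | rfl), hs, rfl⟩
    · exact Or.inl ⟨hs, rfl⟩
    · exact Or.inr (Or.inl ⟨hs, rfl⟩)
    · exact Or.inr (Or.inr ⟨hs, rfl⟩)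
  · rintro (⟨hs, rfl⟩ | ⟨hs, rfl⟩ | ⟨hs, rfl⟩)
    · exact ⟨2, Or.inl rfl, hs, rfl⟩
    · exact ⟨4*n, Or.inr (Or.inl rfl), hs, rfl⟩
    · exact ⟨4*n+2, Or.inr (Or.inr rfl), hs, rfl⟩

lemma key (n : ℕ) (hn : 3 ≤ n) (G : ℕ → ℕ) (hG : subRec n G) : ∀ x, G x = Fc n x := by
  intro x
  induction x using Nat.strong_induction_on with
  | _ x IH =>
  have h8 : 0 < 8*n := by omega
  have hr : x % (8*n) < 8*n := Nat.mod_lt x h8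
  have hr4 : x % 4 = x % (8*n) % 4 := (Nat.mod_mod_of_dvd x ⟨2*n, by ring⟩).symm
  have hrx : x % (8*n) ≤ x := Nat.mod_le x _
  rw [hG x]
  apply mex_eq
  · -- Fc n x is not among the options
    rw [memS]
    rintro (⟨h2, he⟩ | ⟨h4, he⟩ | ⟨h42, he⟩)
    · rw [IH (x-2) (by omega)] at he
      have p1 := Fc_par n x
      have p2 := Fc_par n (x - 2)
      omega
    · rw [IH (x - 4*n) (by omega)] at he
      unfold Fc at he
      rcases le_or_gt (4*n) (x % (8*n)) with h | h
      · rw [mod_sub_lo h8 h] at he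
        have h4' : (x - 4*n) % 4 = x % 4 := by omega
        rw [h4'] at he
        split_ifs at he <;> omega
      · rw [mod_sub_hi h8 h4 (by omega) h] at he
        have h4' : (x - 4*n) % 4 = x % 4 := by omega
        rw [h4'] at he
        split_ifs at he <;> omega
    · rw [IH (x - (4*n+2)) (by omega)] at he
      have p1 := Fc_par n x
      have p2 := Fc_par n (x - (4*n+2))
      omega
  · -- everything below Fc n x is among the options
    intro k hk
    rw [memS]
    rcases le_or_gt (4*n) (x % (8*n)) with hb | hb
    · -- Fc n x = 2 + x%4/2
      have hF : Fc n x = 2 + x % 4 / 2 := by unfold Fc; rw [if_pos hb]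
      rcases le_or_gt 2 (x % 4) with ha | ha
      · -- Fc n x = 3, r ≥ 4n+2
        have hrr : 4*n + 2 ≤ x % (8*n) := by omega
        rcases (by omega : k = 0 ∨ k = 1 ∨ k = 2) with rfl | rfl | rfl
        · -- k = 0 via s = 4n+2
          refine Or.inr (Or.inr ⟨by omega, ?_⟩)
          rw [IH (x - (4*n+2)) (by omega)]
          unfold Fc
          rw [mod_sub_lo h8 (by omega : 4*n+2 ≤ x % (8*n))]
          split_ifs <;> omega
        · -- k = 1 via s = 4n
          refine Or.inr (Or.inl ⟨by omega, ?_⟩)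
          rw [IH (x - 4*n) (by omega)]
          unfold Fc
          rw [mod_sub_lo h8 (by omega : 4*n ≤ x % (8*n))]
          split_ifs <;> omega
        · -- k = 2 via s = 2
          refine Or.inl ⟨by omega, ?_⟩
          rw [IH (x - 2) (by omega)]
          unfold Fc
          rw [mod_sub_lo h8 (by omega : 2 ≤ x % (8*n))]
          split_ifs <;> omega
      · -- Fc n x = 2
        rcases (by omega : k = 0 ∨ k = 1) with rfl | rfl
        · -- k = 0 via s = 4n
          refine Or.inr (Or.inl ⟨by omega, ?_⟩)
          rw [IH (x - 4*n) (by omega)]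
          unfold Fc
          rw [mod_sub_lo h8 (by omega : 4*n ≤ x % (8*n))]
          split_ifs <;> omega
        · -- k = 1
          rcases le_or_gt (4*n+2) (x % (8*n)) with hc | hc
          · refine Or.inr (Or.inr ⟨by omega, ?_⟩)
            rw [IH (x - (4*n+2)) (by omega)]
            unfold Fc
            rw [mod_sub_lo h8 (by omega : 4*n+2 ≤ x % (8*n))]
            split_ifs <;> omega
          · refine Or.inl ⟨by omega, ?_⟩
            rw [IH (x - 2) (by omega)]
            unfold Fc
            rw [mod_sub_lo h8 (by omega : 2 ≤ x % (8*n))]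
            split_ifs <;> omega
    · -- Fc n x = x%4/2 ≤ 1
      have hF : Fc n x = x % 4 / 2 := by unfold Fc; rw [if_neg (by omega)]; omega
      have hk0 : k = 0 ∧ 2 ≤ x % 4 := by omega
      have hrr : 2 ≤ x % (8*n) := by omega
      refine Or.inl ⟨by omega, ?_⟩
      rw [IH (x - 2) (by omega)]
      unfold Fc
      rw [mod_sub_lo h8 hrr]
      split_ifs <;> omega

theorem stmt (n : ℕ) (hn : 3 ≤ n) (G : ℕ → ℕ) (hG : subRec n G) :
    ∀ x : ℕ, (Even (G x) ↔ x % 4 = 0 ∨ x % 4 = 1) ∧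
    (2 ≤ G x ↔ 4*n ≤ x % (8*n) ∧ x % (8*n) ≤ 8*n - 1) := by
  intro x
  rw [key n hn G hG x]
  have h8 : 0 < 8*n := by omega
  have hr : x % (8*n) < 8*n := Nat.mod_lt x h8
  constructor
  · rw [Nat.even_iff]
    have := Fc_par n x
    omega
  · unfold Fc
    split_ifs with h <;> omega
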